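/- arXiv:2412.12520 — 2 statements merged into one kernel-verified Lean document; each statement's English description precedes it below -/
import Mathlib

section
/- Let $A\in\mathbb{R}^{n\times n}$, $C\in\mathbb{R}^{p\times n}$. Suppose that for every discrete probability measure $\mu_0$ on $\mathbb{R}^n$ and every $x\in\mathbb{R}^n$ there exists $t\geq 0$ such that $\mu_0\big((x+\ker Ce^{At})\setminus\{x\}\big)=0$. Then the LTI discrete ensemble with structural dynamics $(A,C)$ is observable: for any two distinct discrete probability measures $\mu_0^{(1)}\neq\mu_0^{(2)}$ there exists $t\geq 0$ with $(Ce^{At})_\#\mu_0^{(1)}\neq(Ce^{At})_\#\mu_0^{(2)}$. -/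
open MeasureTheory

/-- A probability measure is discrete if some countable set has full measure. -/
def IsDiscreteMeasure {α : Type*} [MeasurableSpace α] (μ : Measure α) : Prop :=
  ∃ S : Set α, S.Countable ∧ μ S = 1

/-!
If `μ₁ ≠ μ₂` are discrete, they differ on some atom `{x}`. Apply the hypothesis to the discrete
probability measure `(μ₁ + μ₂) / 2`, which dominates both: at the resulting time `t` the fibre
`x + ker (C e^{tA})` of `y ↦ C e^{tA} y` through `x` carries no mass of `μ₁` or `μ₂` outside `x`,
so the push-forwards give that fibre's image point the masses `μ₁ {x} ≠ μ₂ {x}`.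
-/

open Set

variable {α β : Type*} [MeasurableSpace α]

namespace MeasureTheory

theorem Measure.ext_of_singleton_of_ae_mem_countable [MeasurableSingletonClass α]
    {μ ν : Measure α} {S : Set α} (hS : S.Countable) (hμ : ∀ᵐ x ∂μ, x ∈ S)
    (hν : ∀ᵐ x ∂ν, x ∈ S) (h : ∀ x, μ {x} = ν {x}) : μ = ν := by
  rw [← Measure.restrict_eq_self_of_ae_mem hμ, ← Measure.restrict_eq_self_of_ae_mem hν]
  ext E hE
  have hES : (E ∩ S).Countable := hS.mono inter_subset_right
  have hsum : ∀ ρ : Measure α, ρ (E ∩ S) = ∑' y : ↥(E ∩ S), ρ {(y : α)} := fun ρ ↦ by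
    simpa using (tsum_measure_preimage_singleton (μ := ρ) (f := id) hES
      fun y _ ↦ measurableSet_singleton y).symm
  rw [Measure.restrict_apply hE, Measure.restrict_apply hE, hsum, hsum]
  exact tsum_congr fun y ↦ h y

theorem Measure.map_apply_singleton_of_fiber_diff_null [MeasurableSpace β]
    [MeasurableSingletonClass β] {μ : Measure α} {f : α → β} (hf : Measurable f) {x : α}
    (h : μ (f ⁻¹' {f x} \ {x}) = 0) : μ.map f {f x} = μ {x} := by
  have hfiber : f ⁻¹' {f x} = {x} ∪ (f ⁻¹' {f x} \ {x}) :=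
    (union_sdiff_cancel (singleton_subset_iff.2 (show x ∈ f ⁻¹' {f x} from rfl))).symm
  rw [Measure.map_apply hf (measurableSet_singleton _), hfiber]
  exact measure_congr (union_ae_eq_left_of_ae_eq_empty (ae_eq_empty.2 h))

theorem isProbabilityMeasure_inv_two_smul_add (μ ν : Measure α) [IsProbabilityMeasure μ]
    [IsProbabilityMeasure ν] : IsProbabilityMeasure ((2 : ENNReal)⁻¹ • (μ + ν)) := by
  constructor
  rw [Measure.smul_apply, Measure.add_apply, measure_univ, measure_univ, one_add_one_eq_two,
    smul_eq_mul, ENNReal.inv_mul_cancel two_ne_zero ENNReal.ofNat_ne_top]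

end MeasureTheory

namespace IsDiscreteMeasure

variable [MeasurableSingletonClass α] {μ ν : Measure α}

theorem exists_countable_ae_mem [IsProbabilityMeasure μ] (hμ : IsDiscreteMeasure μ) :
    ∃ S : Set α, S.Countable ∧ ∀ᵐ x ∂μ, x ∈ S := by
  obtain ⟨S, hS, hμS⟩ := hμ
  exact ⟨S, hS, (prob_compl_eq_zero_iff hS.measurableSet).2 hμS⟩

theorem of_ae_mem_countable [IsProbabilityMeasure μ] {S : Set α} (hS : S.Countable)
    (hμ : ∀ᵐ x ∂μ, x ∈ S) : IsDiscreteMeasure μ :=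
  ⟨S, hS, (prob_compl_eq_zero_iff hS.measurableSet).1 hμ⟩

theorem ext_of_singleton [IsProbabilityMeasure μ] [IsProbabilityMeasure ν]
    (hμ : IsDiscreteMeasure μ) (hν : IsDiscreteMeasure ν) (h : ∀ x, μ {x} = ν {x}) : μ = ν := by
  obtain ⟨S, hS, hμS⟩ := hμ.exists_countable_ae_mem
  obtain ⟨T, hT, hνT⟩ := hν.exists_countable_ae_mem
  exact Measure.ext_of_singleton_of_ae_mem_countable (hS.union hT)
    (hμS.mono fun _ ↦ Or.inl) (hνT.mono fun _ ↦ Or.inr) h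

theorem inv_two_smul_add [IsProbabilityMeasure μ] [IsProbabilityMeasure ν]
    (hμ : IsDiscreteMeasure μ) (hν : IsDiscreteMeasure ν) :
    IsDiscreteMeasure ((2 : ENNReal)⁻¹ • (μ + ν)) := by
  have := isProbabilityMeasure_inv_two_smul_add μ ν
  obtain ⟨S, hS, hμS⟩ := hμ.exists_countable_ae_mem
  obtain ⟨T, hT, hνT⟩ := hν.exists_countable_ae_mem
  refine of_ae_mem_countable (hS.union hT) ?_
  exact Measure.ae_smul_measure
    (ae_add_measure_iff.2 ⟨hμS.mono fun _ ↦ Or.inl, hνT.mono fun _ ↦ Or.inr⟩) _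

end IsDiscreteMeasure

theorem Matrix.setOf_mulVec_sub_eq_zero {m n : Type*} [Fintype n] (M : Matrix m n ℝ)
    (x : n → ℝ) : {y | M.mulVec (y - x) = 0} = (fun y ↦ M.mulVec y) ⁻¹' {M.mulVec x} := by
  ext y
  simp [Matrix.mulVec_sub, sub_eq_zero]

theorem sufficient_condition_for_ensemble_observability
    (n p : ℕ) (A : Matrix (Fin n) (Fin n) ℝ) (C : Matrix (Fin p) (Fin n) ℝ)
    (hsuff : ∀ μ0 : Measure (Fin n → ℝ), IsProbabilityMeasure μ0 →
      IsDiscreteMeasure μ0 → ∀ x : Fin n → ℝ, ∃ t : ℝ, 0 ≤ t ∧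
        μ0 ({y | (C * NormedSpace.exp (t • A)).mulVec (y - x) = 0} \ {x}) = 0) :
    ∀ μ1 μ2 : Measure (Fin n → ℝ),
      IsProbabilityMeasure μ1 → IsProbabilityMeasure μ2 →
      IsDiscreteMeasure μ1 → IsDiscreteMeasure μ2 → μ1 ≠ μ2 →
      ∃ t : ℝ, 0 ≤ t ∧
        μ1.map (fun x => (C * NormedSpace.exp (t • A)).mulVec x) ≠
        μ2.map (fun x => (C * NormedSpace.exp (t • A)).mulVec x) := by
  intro μ1 μ2 h1 h2 hd1 hd2 hne
  obtain ⟨x, hx⟩ : ∃ x, μ1 {x} ≠ μ2 {x} := by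
    by_contra! h
    exact hne (hd1.ext_of_singleton hd2 h)
  set μ0 := (2 : ENNReal)⁻¹ • (μ1 + μ2)
  obtain ⟨t, ht, hnull⟩ :=
    hsuff μ0 (isProbabilityMeasure_inv_two_smul_add μ1 μ2) (hd1.inv_two_smul_add hd2) x
  set M := C * NormedSpace.exp (t • A)
  rw [M.setOf_mulVec_sub_eq_zero] at hnull
  have hM : Measurable (fun y ↦ M.mulVec y) :=
    M.mulVecLin.continuous_of_finiteDimensional.measurable
  have h1_ac : μ1 ≪ μ0 := ((Measure.AbsolutelyContinuous.refl _).add_right μ2).trans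
    (Measure.absolutelyContinuous_smul (by norm_num))
  have h2_ac : μ2 ≪ μ0 := ((Measure.AbsolutelyContinuous.refl _).add_right' μ1).trans
    (Measure.absolutelyContinuous_smul (by norm_num))
  refine ⟨t, ht, fun heq ↦ hx ?_⟩
  rw [← Measure.map_apply_singleton_of_fiber_diff_null hM (h1_ac hnull),
    ← Measure.map_apply_singleton_of_fiber_diff_null hM (h2_ac hnull), heq]
end

section
/- A continuous-time LTI discrete ensemble with structural dynamics $(A,C)$ is ensemble observable if and only if the pair $(A,C)$ is observable (i.e., $\bigcap_{t\geq 0}\ker Ce^{At}=\{0\}$). -/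
/-!
If `(A, C)` is not observable, a nonzero `x` with `C e^{tA} x = 0` for all `t ≥ 0` makes the Dirac
measures at `x` and at `0` indistinguishable. Conversely, two discrete measures are carried by a
common countable set `S`. For each of the countably many nonzero differences `d` of points of `S`,
the output `t ↦ C e^{tA} d` is real analytic and, by observability, not identically zero, so it
vanishes only on a nowhere dense set; by Baire some `t ≥ 0` avoids all of them, i.e. `C e^{tA}` is
injective on `S`. A measurable map injective on a countable set carrying two distinct measures
sends them to distinct push-forwards.
-/

open MeasureTheory

open Set

namespace MeasureTheory.Measure

variable {α : Type*} [MeasurableSpace α] [MeasurableSingletonClass α] {μ ν : Measure α}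
  {S : Set α}

theorem ext_of_forall_singleton_of_countable (hS : S.Countable) (hμ : μ Sᶜ = 0)
    (hν : ν Sᶜ = 0) (h : ∀ s ∈ S, μ {s} = ν {s}) : μ = ν := by
  ext E -
  have hES : (E ∩ S).Countable := hS.mono inter_subset_right
  have hsingle : ∀ y ∈ E ∩ S, MeasurableSet (id ⁻¹' {y}) :=
    fun y _ => measurableSet_singleton y
  have hsum : ∀ ρ : Measure α, ρ Sᶜ = 0 → ρ E = ∑' s : ↥(E ∩ S), ρ {(s : α)} := fun ρ hρ => by
    rw [← measure_inter_conull hρ]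
    exact (tsum_measure_preimage_singleton (f := id) hES hsingle).symm
  rw [hsum μ hμ, hsum ν hν]
  exact tsum_congr fun s => h s s.2.2

theorem eq_of_map_eq_of_injOn {β : Type*} [MeasurableSpace β] [MeasurableSingletonClass β]
    {f : α → β} (hS : S.Countable) (hμ : μ Sᶜ = 0) (hν : ν Sᶜ = 0) (hf : Measurable f)
    (hinj : InjOn f S) (h : μ.map f = ν.map f) : μ = ν := by
  refine ext_of_forall_singleton_of_countable hS hμ hν fun s hs => ?_
  have hfiber : f ⁻¹' {f s} ∩ S = {s} := by
    ext y
    exact ⟨fun hy => hinj hy.2 hs hy.1, by rintro rfl; exact ⟨rfl, hs⟩⟩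
  have hmap : ∀ ρ : Measure α, ρ Sᶜ = 0 → ρ {s} = ρ.map f {f s} := fun ρ hρ => by
    rw [map_apply hf (measurableSet_singleton _), ← measure_inter_conull hρ (s := f ⁻¹' {f s}),
      hfiber]
  rw [hmap μ hμ, hmap ν hν, h]

end MeasureTheory.Measure

section IsDiscreteMeasure

variable {α : Type*} [MeasurableSpace α] [MeasurableSingletonClass α]

theorem isDiscreteMeasure_dirac (x : α) : IsDiscreteMeasure (Measure.dirac x) :=
  ⟨{x}, countable_singleton x, by simp⟩

theorem IsDiscreteMeasure.exists_countable_measure_compl_eq_zero {μ : Measure α}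
    [IsProbabilityMeasure μ] (h : IsDiscreteMeasure μ) : ∃ S : Set α, S.Countable ∧ μ Sᶜ = 0 :=
  let ⟨S, hS, hμS⟩ := h
  ⟨S, hS, (prob_compl_eq_zero_iff hS.measurableSet).2 hμS⟩

theorem IsDiscreteMeasure.exists_common_countable_support {μ ν : Measure α}
    [IsProbabilityMeasure μ] [IsProbabilityMeasure ν] (hμ : IsDiscreteMeasure μ)
    (hν : IsDiscreteMeasure ν) : ∃ S : Set α, S.Countable ∧ μ Sᶜ = 0 ∧ ν Sᶜ = 0 := by
  obtain ⟨S, hS, hμS⟩ := hμ.exists_countable_measure_compl_eq_zero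
  obtain ⟨T, hT, hνT⟩ := hν.exists_countable_measure_compl_eq_zero
  exact ⟨S ∪ T, hS.union hT,
    measure_mono_null (compl_subset_compl.2 subset_union_left) hμS,
    measure_mono_null (compl_subset_compl.2 subset_union_right) hνT⟩

end IsDiscreteMeasure

section Analytic

variable {𝕜 E F : Type*} [NontriviallyNormedField 𝕜] [NormedAddCommGroup E] [NormedSpace 𝕜 E]
  [NormedAddCommGroup F] [NormedSpace 𝕜 F]

theorem AnalyticOnNhd.dense_setOf_ne_zero [PreconnectedSpace E] {f : E → F}
    (hf : AnalyticOnNhd 𝕜 f univ) (hf0 : f ≠ 0) : Dense {x | f x ≠ 0} := by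
  rw [← compl_ofPred, ← interior_eq_empty_iff_dense_compl]
  by_contra hne
  obtain ⟨x₀, hx₀⟩ := nonempty_iff_ne_empty.2 hne
  have hzero : f =ᶠ[nhds x₀] 0 := mem_interior_iff_mem_nhds.1 hx₀
  exact hf0 (funext fun x => hf.eqOn_zero_of_preconnected_of_eventuallyEq_zero
    isPreconnected_univ (mem_univ x₀) hzero (mem_univ x))

theorem exists_mem_forall_ne_zero_of_analyticOnNhd [PreconnectedSpace E] [CompleteSpace E]
    {ι : Type*} [Countable ι] {f : ι → E → F} (hf : ∀ i, AnalyticOnNhd 𝕜 (f i) univ)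
    (hf0 : ∀ i, f i ≠ 0) {U : Set E} (hU : IsOpen U) (hU₀ : U.Nonempty) :
    ∃ x ∈ U, ∀ i, f i x ≠ 0 := by
  have hdense : Dense (⋂ i, {x | f i x ≠ 0}) :=
    dense_iInter_of_isOpen (fun i => isOpen_ne_fun (hf i).continuous continuous_const)
      fun i => (hf i).dense_setOf_ne_zero (hf0 i)
  obtain ⟨x, hxU, hx⟩ := hdense.inter_open_nonempty U hU hU₀
  exact ⟨x, hxU, mem_iInter.1 hx⟩

end Analytic

theorem analyticOnNhd_exp_smul {𝕂 𝔸 : Type*} [RCLike 𝕂] [NormedRing 𝔸] [NormedAlgebra 𝕂 𝔸]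
    [CompleteSpace 𝔸] (a : 𝔸) : AnalyticOnNhd 𝕂 (fun t : 𝕂 => NormedSpace.exp (t • a)) univ :=
  fun _ _ => (NormedSpace.exp_analytic _).comp (analyticAt_id.smul analyticAt_const)

section Observability

open Matrix

-- Any norm would do: `NormedSpace.exp` does not depend on the choice.
attribute [local instance] Matrix.linftyOpNormedRing Matrix.linftyOpNormedAlgebra

variable {m n : Type*} [Fintype m] [Fintype n] [DecidableEq n]

theorem analyticOnNhd_mulVec_exp_smul (A : Matrix n n ℝ) (C : Matrix m n ℝ) (x : n → ℝ) :
    AnalyticOnNhd ℝ (fun t : ℝ => (C * NormedSpace.exp (t • A)) *ᵥ x) univ := by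
  let L : Matrix n n ℝ →ₗ[ℝ] m → ℝ :=
    C.mulVecLin ∘ₗ LinearMap.applyₗ x ∘ₗ Matrix.toLin'.toLinearMap
  have hL : ∀ B, (C * B) *ᵥ x = L B := fun B => by simp [L, Matrix.mulVec_mulVec]
  simp_rw [hL]
  exact fun t ht => L.toContinuousLinearMap.analyticAt _ |>.comp (analyticOnNhd_exp_smul A t ht)

variable {A : Matrix n n ℝ} {C : Matrix m n ℝ}

theorem exists_nonneg_forall_mulVec_exp_smul_ne_zero
    (hobs : ∀ x : n → ℝ, (∀ t : ℝ, 0 ≤ t → (C * NormedSpace.exp (t • A)) *ᵥ x = 0) → x = 0)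
    {D : Set (n → ℝ)} (hD : D.Countable) (hD₀ : 0 ∉ D) :
    ∃ t : ℝ, 0 ≤ t ∧ ∀ d ∈ D, (C * NormedSpace.exp (t • A)) *ᵥ d ≠ 0 := by
  have := hD.to_subtype
  obtain ⟨t, ht, hne⟩ := exists_mem_forall_ne_zero_of_analyticOnNhd
    (f := fun (d : D) (t : ℝ) => (C * NormedSpace.exp (t • A)) *ᵥ (d : n → ℝ))
    (fun d => analyticOnNhd_mulVec_exp_smul A C d)
    (fun d hd => hD₀ (hobs d (fun t _ => congrFun hd t) ▸ d.2))
    isOpen_Ioi (nonempty_Ioi (a := (0 : ℝ)))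
  exact ⟨t, le_of_lt ht, fun d hd => hne ⟨d, hd⟩⟩

theorem exists_nonneg_injOn_mulVec_exp_smul
    (hobs : ∀ x : n → ℝ, (∀ t : ℝ, 0 ≤ t → (C * NormedSpace.exp (t • A)) *ᵥ x = 0) → x = 0)
    {S : Set (n → ℝ)} (hS : S.Countable) :
    ∃ t : ℝ, 0 ≤ t ∧ InjOn (fun x => (C * NormedSpace.exp (t • A)) *ᵥ x) S := by
  obtain ⟨t, ht, hne⟩ := exists_nonneg_forall_mulVec_exp_smul_ne_zero hobs
    (D := image2 (· - ·) S S \ {0}) ((hS.image2 hS _).mono sdiff_subset)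
    (notMem_sdiff_of_mem rfl)
  refine ⟨t, ht, fun a ha b hb hab => by_contra fun hab' => ?_⟩
  refine hne (a - b) ⟨mem_image2_of_mem ha hb, sub_ne_zero.2 hab'⟩ ?_
  rw [mulVec_sub]
  exact sub_eq_zero.2 hab

end Observability

theorem ensemble_observability_iff_observability
    (n p : ℕ) (A : Matrix (Fin n) (Fin n) ℝ) (C : Matrix (Fin p) (Fin n) ℝ) :
    (∀ μ1 μ2 : Measure (Fin n → ℝ),
      IsProbabilityMeasure μ1 → IsProbabilityMeasure μ2 →
      IsDiscreteMeasure μ1 → IsDiscreteMeasure μ2 → μ1 ≠ μ2 →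
      ∃ t : ℝ, 0 ≤ t ∧
        μ1.map (fun x => (C * NormedSpace.exp (t • A)).mulVec x) ≠
        μ2.map (fun x => (C * NormedSpace.exp (t • A)).mulVec x)) ↔
    {x : Fin n → ℝ | ∀ t : ℝ, 0 ≤ t → (C * NormedSpace.exp (t • A)).mulVec x = 0}
      = {0} := by
  rw [eq_singleton_iff_unique_mem]
  constructor
  · refine fun hens => ⟨fun t _ => Matrix.mulVec_zero _, fun x hx => by_contra fun hx₀ => ?_⟩
    obtain ⟨t, ht, hmap⟩ := hens _ _ inferInstance inferInstance (isDiscreteMeasure_dirac x)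
      (isDiscreteMeasure_dirac 0) (dirac_ne_dirac hx₀)
    exact hmap (by rw [Measure.map_dirac, Measure.map_dirac, hx t ht, Matrix.mulVec_zero])
  · rintro ⟨-, hobs⟩ μ1 μ2 _ _ hμ1 hμ2 hne
    obtain ⟨S, hS, hS1, hS2⟩ := hμ1.exists_common_countable_support hμ2
    obtain ⟨t, ht, hinj⟩ := exists_nonneg_injOn_mulVec_exp_smul hobs hS
    have hmeas : Measurable fun x => (C * NormedSpace.exp (t • A)).mulVec x :=
      Continuous.measurable (by fun_prop)
    exact ⟨t, ht, fun hmap => hne (Measure.eq_of_map_eq_of_injOn hS hS1 hS2 hmeas hinj hmap)⟩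
end
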